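/- Let H be a semigroup and G an H-group satisfying H-max-n. Then ℓ'_H(G) = sup{ℓ'_H(G/N) + 1 : N an H-stable normal subgroup of G with ℓ_{GH}(N) ≥ ω} (sup ∅ = 0). -/

import Mathlib

noncomputable section

/-- Chabauty topology on the set of subgroups of `G`: the topology induced from the
product topology on `{0,1}^G` via indicator functions. -/
noncomputable instance chabautyTopology {G : Type*} [Group G] : TopologicalSpace (Subgroup G) :=
  TopologicalSpace.induced (fun N g => @decide (g ∈ N) (Classical.propDecidable _))
    (inferInstance : TopologicalSpace (G → Bool))

/-- Iterated Cantor–Bendixson derivatives of the space `X`: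
`X^(0) = X`, `X^(α+1)` is the set of accumulation points of `X^(α)`, and
`X^(λ) = ⋂_{β<λ} X^(β)` for limit `λ`. -/
noncomputable def cbD (X : Type*) [TopologicalSpace X] (o : Ordinal) : Set X :=
  Ordinal.limitRecOn o Set.univ (fun _ ih => {x | AccPt x (Filter.principal ih)})
    (fun o _ ih => ⋂ β : Set.Iio o, ih β.1 β.2)

/-- The point `x` has Cantor–Bendixson rank exactly `α` in `X`: it belongs to the `α`-th
derivative but not to the `(α+1)`-st (so `α` is the largest ordinal with `x ∈ X^(α)`). -/
def CBRankEq {X : Type*} [TopologicalSpace X] (x : X) (α : Ordinal) : Prop :=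
  x ∈ cbD X α ∧ x ∉ cbD X (α + 1)

/-- The Cantor–Bendixson rank of a point: the largest `α` with `x ∈ X^(α)`
(the set of such `α` is an initial segment of the ordinals, closed under limits). -/
noncomputable def cbRank {X : Type*} [TopologicalSpace X] (x : X) : Ordinal :=
  sSup {α | x ∈ cbD X α}

/-- The trivial subgroup, as a point of the space `𝒩(G)` of normal subgroups of `G`
(with its Chabauty topology); `cb(G)` is the Cantor–Bendixson rank of this point. -/
def nsBot (G : Type*) [Group G] : {N : Subgroup G // N.Normal} := ⟨⊥, inferInstance⟩

universe u

open Classical in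
/-- The ordinal-valued "length" attached to an element of a poset `L`, defined by
well-founded recursion on `>` (available under the max-n condition, i.e. well-foundedness
of `>`; junk value `0` otherwise): `gtRank x = sup { gtRank y + 1 : y > x }`.

For `L` the lattice of (`H`-stable) normal subgroups of a group `G` (resp. of submodules
of a module `M`), `gtRank N` is the ordinal length `ℓ(G/N)` (resp. `ℓ(M/N)`) of the
quotient, since (`H`-stable) normal subgroups of `G/N` correspond to those of `G`
containing `N`; in particular `gtRank ⊥ = ℓ(G)` (resp. `ℓ(M)`). -/
noncomputable def gtRank {L : Type u} [Preorder L] (x : L) : Ordinal.{u} :=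
  if h : WellFounded ((· > ·) : L → L → Prop) then (h.apply x).rank else 0

/-- An `H`-group structure on `G` (for `H` a semigroup) is an action of `H` on `G` by group
endomorphisms, i.e. a semigroup homomorphism `H → End(G)`. A normal subgroup `N` is
`H`-stable if it is invariant under the action. -/
def HStable {H G : Type*} [Mul H] [Group G] (act : H →ₙ* Monoid.End G)
    (N : Subgroup G) : Prop :=
  ∀ (h : H) (g : G), g ∈ N → act h g ∈ N

/-- The trivial subgroup as a point of the space `𝒩_H(G)` of `H`-stable normal
subgroups of `G`. -/
def hBot {H G : Type*} [Mul H] [Group G] (act : H →ₙ* Monoid.End G) :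
    {N : Subgroup G // N.Normal ∧ HStable act N} :=
  ⟨⊥, inferInstance, fun h g hg => by
    rw [Subgroup.mem_bot] at hg ⊢
    rw [hg, map_one]⟩

/-- The trivial subgroup as an element of the lattice of `H`-stable normal subgroups of `G`
contained in `M`; this lattice is the lattice of `GH`-stable normal subgroups of the
`GH`-group `M` (where `GH = G ⋊ H` acts on the normal subgroup `M` by conjugation and by
the `H`-action), so that `gtRank` of this element is the length `ℓ_{GH}(M)`. -/
def hBotIn {H G : Type*} [Mul H] [Group G] (act : H →ₙ* Monoid.End G) (M : Subgroup G) :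
    {K : Subgroup G // (K.Normal ∧ HStable act K) ∧ K ≤ M} :=
  ⟨⊥, ⟨inferInstance, fun h g hg => by
    rw [Subgroup.mem_bot] at hg ⊢
    rw [hg, map_one]⟩, bot_le⟩

/-!
Write `ℓ(N)` for the length of `G/N` and `ℓ_{GH}(N)` for that of `N`. For every `H`-stable normal
`N` one has `ℓ(N) + ℓ_{GH}(N) ≤ ℓ(G)`, and conversely `ℓ(G) ≤ ℓ(N) + ℓ_{GH}(N)` when
`ℓ_{GH}(N)` is finite: by induction along `K ↦ (K ⊔ N, K ⊓ N)`, which is strictly monotone by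
Dedekind's modular law. The first inequality bounds each `ℓ'(G/N) + 1` with `ℓ_{GH}(N) ≥ ω` by
`ℓ'(G)`. Conversely, for `γ < ℓ'(G)` every ordinal below `ℓ(G)` is a length, so `ℓ(N) = ω·γ` for
some `N`, and the second inequality forces `ℓ_{GH}(N) ≥ ω`, since `ℓ(G) ≥ ω·γ + ω`.
-/

theorem csSup_eq_of_forall_le_of_forall_lt_exists_gt' {α : Type*}
    [ConditionallyCompleteLinearOrderBot α] {s : Set α} {a : α} (hle : ∀ b ∈ s, b ≤ a)
    (hlt : ∀ c < a, ∃ b ∈ s, c < b) : sSup s = a := by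
  refine le_antisymm (csSup_le' hle) (le_of_forall_lt fun c hc => ?_)
  obtain ⟨b, hb, hcb⟩ := hlt c hc
  exact hcb.trans_le (le_csSup ⟨a, hle⟩ hb)

namespace Ordinal

theorem add_natCast_lt_add_natCast {a b : Ordinal} {m k : ℕ} (hab : a < b) (hmk : m ≤ k) :
    a + m < b + k :=
  calc a + m < a + (m + 1 : ℕ) := by gcongr; exact_mod_cast m.lt_succ_self
    _ = a + 1 + m := by rw [Nat.cast_add_one, Nat.cast_add_one_comm, add_assoc]
    _ ≤ b + k := by gcongr; exact Order.add_one_le_iff.2 hab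

theorem lt_div_omega0_iff {a b : Ordinal} : a < b / ω ↔ ω * a + ω ≤ b := by
  rw [← Order.add_one_le_iff, ← mul_le_iff_le_div omega0_ne_zero, mul_add_one]

theorem omega0_mul_div_omega0_add_omega0 (a : Ordinal) : ω * (a / ω) + ω = a + ω := by
  conv_rhs => rw [← div_add_mod a ω, add_assoc, add_omega0 (mod_lt a omega0_ne_zero)]

end Ordinal

section Rank

open Ordinal

variable {α : Type u} [PartialOrder α] [WellFoundedGT α]

theorem gtRank_eq_rank (x : α) : gtRank x = IsWellFounded.rank (· > ·) x := by
  rw [gtRank, dif_pos IsWellFounded.wf]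
  rfl

theorem gtRank_strictAnti : StrictAnti (gtRank : α → Ordinal) := by
  simpa only [StrictAnti, gtRank_eq_rank] using WellFoundedGT.rank_strictAnti (α := α)

theorem gtRank_antitone : Antitone (gtRank : α → Ordinal) :=
  gtRank_strictAnti.antitone

theorem gtRank_le_iff {x : α} {o : Ordinal} : gtRank x ≤ o ↔ ∀ y, x < y → gtRank y < o := by
  simp only [gtRank_eq_rank, IsWellFounded.rank_eq (· > ·) x, Ordinal.iSup_le_iff,
    Order.succ_le_iff, Subtype.forall, gt_iff_lt]

theorem lt_gtRank_iff {x : α} {o : Ordinal} : o < gtRank x ↔ ∃ y, x < y ∧ o ≤ gtRank y := by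
  simpa only [not_le, not_forall, not_lt, exists_prop] using gtRank_le_iff.not

theorem exists_gtRank_eq {x : α} {o : Ordinal} (h : o ≤ gtRank x) : ∃ y : α, gtRank y = o := by
  simp only [gtRank_eq_rank] at h ⊢
  exact IsWellFounded.mem_range_rank_of_le h

theorem gtRank_add_gtRank_le {β : Type u} [PartialOrder β] {f : β → α} (hf : StrictMono f)
    {a : α} (ha : ∀ y, f y ≤ a) (y : β) : gtRank a + gtRank y ≤ gtRank (f y) := by
  have : WellFoundedGT β := hf.wellFoundedGT
  induction y using WellFoundedGT.induction with
  | _ y ih =>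
    rcases eq_or_ne (gtRank y) 0 with hy | hy
    · rw [hy, add_zero]
      exact gtRank_antitone (ha y)
    refine (add_le_iff hy).2 fun c hc => ?_
    obtain ⟨z, hyz, hcz⟩ := lt_gtRank_iff.1 hc
    calc gtRank a + c ≤ gtRank a + gtRank z := by gcongr
      _ ≤ gtRank (f z) := ih z hyz
      _ < gtRank (f y) := gtRank_strictAnti (hf hyz)

/-- Finiteness of the second length is what lets a strict drop of the first one absorb the
`+ 1` of a step (for infinite lengths this fails, as `1 + ω = ω`). -/
theorem gtRank_le_gtRank_add_gtRank {β γ : Type u} [PartialOrder β] [WellFoundedGT β]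
    [PartialOrder γ] [WellFoundedGT γ] {f : α → β} {g : α → γ}
    (hfg : StrictMono fun x => (f x, g x)) {x : α} (hx : gtRank (g x) < ω) :
    gtRank x ≤ gtRank (f x) + gtRank (g x) := by
  induction x using WellFoundedGT.induction with
  | _ x ih =>
    refine gtRank_le_iff.2 fun y hxy => ?_
    have hgy : gtRank (g y) ≤ gtRank (g x) := gtRank_antitone (hfg hxy).le.2
    refine (ih y hxy (hgy.trans_lt hx)).trans_lt ?_
    rcases Prod.lt_iff.1 (hfg hxy) with ⟨hf, -⟩ | ⟨hf, hg⟩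
    · obtain ⟨k, hk⟩ := lt_omega0.1 hx
      obtain ⟨m, hm⟩ := lt_omega0.1 (hgy.trans_lt hx)
      rw [hk, hm] at hgy ⊢
      exact add_natCast_lt_add_natCast (gtRank_strictAnti hf) (by exact_mod_cast hgy)
    · calc gtRank (f y) + gtRank (g y) < gtRank (f y) + gtRank (g x) := by
            gcongr; exact gtRank_strictAnti hg
        _ ≤ gtRank (f x) + gtRank (g x) := by gcongr; exact gtRank_antitone hf

end Rank

open scoped Pointwise in
theorem Subgroup.eq_of_le_of_inf_le_of_le_sup_of_normal {G : Type*} [Group G]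
    {x y N : Subgroup G} [N.Normal] (hxy : x ≤ y) (hinf : y ⊓ N ≤ x) (hsup : y ≤ x ⊔ N) :
    x = y := by
  refine le_antisymm hxy fun g hg => ?_
  obtain ⟨a, ha, n, hn, rfl⟩ : g ∈ (x : Set G) * (N : Set G) := by
    rw [← mul_normal]
    exact hsup hg
  have hny : n ∈ y := by simpa using mul_mem (inv_mem (hxy ha)) hg
  exact mul_mem ha (hinf ⟨hny, hn⟩)

section StableNormal

open Ordinal

variable {H : Type*} [Mul H] {G : Type u} [Group G] {act : H →ₙ* Monoid.End G}

theorem HStable.sup {A B : Subgroup G} (hA : HStable act A) (hB : HStable act B) :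
    HStable act (A ⊔ B) := fun h =>
  show A ⊔ B ≤ (A ⊔ B).comap (act h : G →* G) from
    sup_le (fun g hg => Subgroup.mem_sup_left (hA h g hg))
      (fun g hg => Subgroup.mem_sup_right (hB h g hg))

theorem HStable.inf {A B : Subgroup G} (hA : HStable act A) (hB : HStable act B) :
    HStable act (A ⊓ B) :=
  fun h g hg => ⟨hA h g hg.1, hB h g hg.2⟩

variable (act) in
abbrev StableNormal : Type u := {N : Subgroup G // N.Normal ∧ HStable act N}

variable (act) in
abbrev StableNormalLE (M : Subgroup G) : Type u :=
  {K : Subgroup G // (K.Normal ∧ HStable act K) ∧ K ≤ M}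

def StableNormalLE.toStableNormal {M : Subgroup G} (K : StableNormalLE act M) :
    StableNormal act :=
  ⟨K.1, K.2.1⟩

theorem StableNormalLE.strictMono_toStableNormal (M : Subgroup G) :
    StrictMono (toStableNormal : StableNormalLE act M → StableNormal act) :=
  fun _ _ h => h

def StableNormal.supRight (N K : StableNormal act) : StableNormal act :=
  ⟨K.1 ⊔ N.1, by have := K.2.1; have := N.2.1; exact Subgroup.sup_normal _ _, K.2.2.sup N.2.2⟩

def StableNormal.infRight (N K : StableNormal act) : StableNormalLE act N.1 :=
  ⟨K.1 ⊓ N.1, ⟨by have := K.2.1; have := N.2.1; exact Subgroup.normal_inf_normal _ _,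
    K.2.2.inf N.2.2⟩, inf_le_right⟩

theorem StableNormal.strictMono_supRight_prod_infRight (N : StableNormal act) :
    StrictMono fun K => (N.supRight K, N.infRight K) := by
  intro x y hxy
  refine lt_of_le_not_ge ⟨sup_le_sup_right hxy.le N.1, inf_le_inf_right N.1 hxy.le⟩ ?_
  rintro ⟨hsup, hinf⟩
  have := N.2.1
  exact hxy.ne <| Subtype.ext <| Subgroup.eq_of_le_of_inf_le_of_le_sup_of_normal hxy.le
    ((show y.1 ⊓ N.1 ≤ x.1 ⊓ N.1 from hinf).trans inf_le_left)
    (le_sup_left.trans (show y.1 ⊔ N.1 ≤ x.1 ⊔ N.1 from hsup))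

variable [WellFoundedGT (StableNormal act)]

theorem gtRank_add_gtRank_hBotIn_le (N : StableNormal act) :
    gtRank N + gtRank (hBotIn act N.1) ≤ gtRank (hBot act) :=
  gtRank_add_gtRank_le (StableNormalLE.strictMono_toStableNormal N.1) (fun K => K.2.2)
    (hBotIn act N.1)

theorem gtRank_hBot_le_add_gtRank_hBotIn (N : StableNormal act)
    (hN : gtRank (hBotIn act N.1) < ω) :
    gtRank (hBot act) ≤ gtRank N + gtRank (hBotIn act N.1) := by
  have : WellFoundedGT (StableNormalLE act N.1) :=
    (StableNormalLE.strictMono_toStableNormal N.1).wellFoundedGT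
  have hsup : N.supRight (hBot act) = N := Subtype.ext (bot_sup_eq _)
  have hinf : N.infRight (hBot act) = hBotIn act N.1 := Subtype.ext (bot_inf_eq _)
  have := gtRank_le_gtRank_add_gtRank N.strictMono_supRight_prod_infRight (x := hBot act)
    (hinf ▸ hN)
  rwa [hsup, hinf] at this

end StableNormal

/-- Let `H` be a semigroup and `G` an `H`-group satisfying `H`-max-n.
Then the reduced length satisfies
`ℓ'_H(G) = sup { ℓ'_H(G/N) + 1 : N an H-stable normal subgroup with ℓ_{GH}(N) ≥ ω }`
(`sup ∅ = 0`). Here `ℓ'` is the left quotient of `ℓ` by `ω` (so `ℓ = ω·ℓ' + r`, `r < ω`),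
`ℓ_H(G/N) = gtRank N` in the lattice of `H`-stable normal subgroups of `G`, and
`ℓ_{GH}(N) = gtRank ⊥` in the lattice of `H`-stable normal subgroups contained in `N`. -/
theorem reduced_length_eq_sup {H : Type*} [Semigroup H] {G : Type u} [Group G]
    (act : H →ₙ* Monoid.End G)
    (hmax : WellFounded ((· > ·) :
      {N : Subgroup G // N.Normal ∧ HStable act N} →
        {N : Subgroup G // N.Normal ∧ HStable act N} → Prop)) :
    gtRank (hBot act) / Ordinal.omega0 =
      sSup {β : Ordinal.{u} | ∃ (N : Subgroup G) (hN : N.Normal) (hNs : HStable act N),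
        Ordinal.omega0 ≤ gtRank (hBotIn act N) ∧
        β = gtRank (⟨N, hN, hNs⟩ : {K : Subgroup G // K.Normal ∧ HStable act K})
              / Ordinal.omega0 + 1} := by
  have : WellFoundedGT (StableNormal act) := ⟨hmax⟩
  refine (csSup_eq_of_forall_le_of_forall_lt_exists_gt' ?_ fun γ hγ => ?_).symm
  · rintro _ ⟨N, hN, hNs, hω, rfl⟩
    rw [Order.add_one_le_iff, Ordinal.lt_div_omega0_iff,
      Ordinal.omega0_mul_div_omega0_add_omega0]
    exact (add_le_add_right hω _).trans (gtRank_add_gtRank_hBotIn_le ⟨N, hN, hNs⟩)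
  rw [Ordinal.lt_div_omega0_iff] at hγ
  obtain ⟨N, hN⟩ := exists_gtRank_eq (le_self_add.trans hγ)
  have hω : Ordinal.omega0 ≤ gtRank (hBotIn act N.1) := not_lt.1 fun hfin =>
    (gtRank_hBot_le_add_gtRank_hBotIn N hfin).not_gt <|
      hN ▸ ((add_lt_add_iff_left _).2 hfin).trans_le hγ
  refine ⟨γ + 1, ⟨N.1, N.2.1, N.2.2, hω, ?_⟩, Order.lt_add_one_iff.2 le_rfl⟩
  rw [hN, Ordinal.mul_div_cancel _ Ordinal.omega0_ne_zero]
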